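/- Let G = (V,E) be a finite, connected, undirected graph with no self-loops, V = {1,…,N}, with edge weights ω_ij, ω̃_ij > 0, and let β > 0, α ∈ ℝ, 𝕍 ∈ ℝ^N, 𝕎 ∈ ℝ^{N×N} symmetric. Then sublevel sets of H_0 stay away from the boundary and have bounded gradient differences: for every c ∈ ℝ there exist δ > 0 and M > 0 such that every (ρ, S) ∈ P_o(G) × ℝ^N with H_0(ρ, S) ≤ c satisfies min_{1≤i≤N} ρ_i ≥ δ and |S_i − S_j| ≤ M for every (i,j) ∈ E. -/

import Mathlib

set_option maxHeartbeats 1000000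


open scoped BigOperators

noncomputable section

/-- Density-dependent edge weight `θ_ij(ρ) = (ρ_i + ρ_j)/2`. -/
def thetaA {N : ℕ} (ρ : Fin N → ℝ) (i j : Fin N) : ℝ := (ρ i + ρ j) / 2

/-- Kinetic energy `K(ρ,S) = (1/4) ∑_{(i,j)∈E} ω_ij (S_i - S_j)² θ_ij(ρ)`. -/
def kinE {N : ℕ} (E : Fin N → Fin N → Prop) [DecidableRel E]
    (ω : Fin N → Fin N → ℝ) (ρ S : Fin N → ℝ) : ℝ :=
  (1 / 4) * ∑ i, ∑ j, (if E i j then ω i j * (S i - S j) ^ 2 * thetaA ρ i j else 0)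

/-- Discrete Fisher information
`I(ρ) = (1/2) ∑_i ∑_{j∈N(i)} ω̃_ij (log ρ_i - log ρ_j)(ρ_i - ρ_j)`. -/
def fisherI {N : ℕ} (E : Fin N → Fin N → Prop) [DecidableRel E]
    (ωt : Fin N → Fin N → ℝ) (ρ : Fin N → ℝ) : ℝ :=
  (1 / 2) * ∑ i, ∑ j,
    (if E i j then ωt i j * (Real.log (ρ i) - Real.log (ρ j)) * (ρ i - ρ j) else 0)

/-- Linear potential `V(ρ) = ∑_i 𝕍_i ρ_i`. -/
def potV {N : ℕ} (V : Fin N → ℝ) (ρ : Fin N → ℝ) : ℝ := ∑ i, V i * ρ i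

/-- Interaction potential `W(ρ) = (1/2) ∑_{i,j} 𝕎_ij ρ_i ρ_j`. -/
def potW {N : ℕ} (W : Fin N → Fin N → ℝ) (ρ : Fin N → ℝ) : ℝ :=
  (1 / 2) * ∑ i, ∑ j, W i j * ρ i * ρ j

/-- Entropy `L_ent(ρ) = ∑_i (ρ_i log ρ_i - ρ_i)`. -/
def entL {N : ℕ} (ρ : Fin N → ℝ) : ℝ := ∑ i, (ρ i * Real.log (ρ i) - ρ i)

/-- The dominated energy `H_0(ρ,S) = K(ρ,S) + β I(ρ) + V(ρ) + W(ρ) - α L_ent(ρ)`. -/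
def H0 {N : ℕ} (E : Fin N → Fin N → Prop) [DecidableRel E]
    (ω ωt : Fin N → Fin N → ℝ) (β α : ℝ) (V : Fin N → ℝ) (W : Fin N → Fin N → ℝ)
    (ρ S : Fin N → ℝ) : ℝ :=
  kinE E ω ρ S + β * fisherI E ωt ρ + potV V ρ + potW W ρ - α * entL ρ

def gfun (C s : ℝ) : ℝ := min (s / 2) (s * Real.exp (-(2 * C) / s))

lemma gfun_pos {C s : ℝ} (hs : 0 < s) : 0 < gfun C s :=
  lt_min (by linarith) (mul_pos hs (Real.exp_pos _))

lemma gfun_le {C s : ℝ} (hs : 0 < s) : gfun C s ≤ s :=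
  le_trans (min_le_left _ _) (by linarith)

lemma log_sub_mul_nonneg {a b : ℝ} (ha : 0 < a) (hb : 0 < b) :
    0 ≤ (Real.log a - Real.log b) * (a - b) := by
  rcases le_total a b with h | h
  · nlinarith [Real.log_le_log ha h]
  · nlinarith [Real.log_le_log hb h]

lemma step_lemma {C s a b : ℝ} (hs : 0 < s) (ha : 0 < a) (hsb : s ≤ b)
    (h : (Real.log b - Real.log a) * (b - a) ≤ C) : gfun C s ≤ a := by
  by_cases h2 : s / 2 ≤ a
  · exact le_trans (min_le_left _ _) h2
  · push_neg at h2
    have hb : 0 < b := lt_of_lt_of_le hs hsb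
    have hlog1 : Real.log s ≤ Real.log b := Real.log_le_log hs hsb
    have hlog2 : Real.log a ≤ Real.log s := by
      apply le_of_lt; apply Real.log_lt_log ha; linarith
    have hkey : (Real.log s - Real.log a) * (s / 2) ≤ C := by
      calc (Real.log s - Real.log a) * (s / 2)
          ≤ (Real.log b - Real.log a) * (b - a) := by
            apply mul_le_mul (by linarith) (by linarith) (by linarith) (by linarith)
        _ ≤ C := h
    have hla : Real.log s - (2 * C) / s ≤ Real.log a := by
      rw [sub_le_iff_le_add]
      have h3 : Real.log s - Real.log a ≤ (2 * C) / s := by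
        rw [le_div_iff₀ hs]; nlinarith
      linarith
    have : s * Real.exp (-(2 * C) / s) ≤ a := by
      calc s * Real.exp (-(2 * C) / s)
          = Real.exp (Real.log s + -(2 * C) / s) := by
            rw [Real.exp_add, Real.exp_log hs]
        _ ≤ Real.exp (Real.log a) := by
            apply Real.exp_le_exp.2; rw [neg_div]; linarith
        _ = a := Real.exp_log ha
    exact le_trans (min_le_right _ _) this

lemma cross_lemma {N : ℕ} (E : Fin N → Fin N → Prop) (P : Fin N → Prop)
    {i j : Fin N} (h : Relation.ReflTransGen (fun a b => E a b) i j)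
    (hi : P i) (hj : ¬ P j) : ∃ u v, E u v ∧ P u ∧ ¬ P v := by
  induction h using Relation.ReflTransGen.head_induction_on with
  | refl => exact absurd hi hj
  | head hab _ ih =>
    rename_i a b _
    by_cases hb : P b
    · exact ih hb
    · exact ⟨a, b, hab, hi, hb⟩

lemma gfun_iter_pos (C : ℝ) (n : ℕ) {x : ℝ} (hx : 0 < x) : 0 < (gfun C)^[n] x := by
  induction n with
  | zero => simpa
  | succ n ih => rw [Function.iterate_succ_apply']; exact gfun_pos ih

/-- Sublevel sets of `H_0` stay away from the boundary of the simplex and have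
bounded gradient differences: for every `c` there are `δ > 0` and `M > 0` such that
any `(ρ,S) ∈ P_o(G) × ℝ^N` with `H_0(ρ,S) ≤ c` satisfies `ρ_i ≥ δ` for all `i` and
`|S_i − S_j| ≤ M` on every edge. -/
theorem H0_sublevel_sets_away_from_boundary
    (N : ℕ) (hN : 2 ≤ N) (E : Fin N → Fin N → Prop) [DecidableRel E]
    (hEsymm : ∀ i j, E i j ↔ E j i) (hEirr : ∀ i, ¬ E i i)
    (hconn : ∀ i j : Fin N, Relation.ReflTransGen (fun a b => E a b) i j)
    (ω ωt : Fin N → Fin N → ℝ)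
    (hωsymm : ∀ i j, ω i j = ω j i) (hωpos : ∀ i j, E i j → 0 < ω i j)
    (hωtsymm : ∀ i j, ωt i j = ωt j i) (hωtpos : ∀ i j, E i j → 0 < ωt i j)
    (β : ℝ) (hβ : 0 < β) (α : ℝ)
    (V : Fin N → ℝ) (W : Fin N → Fin N → ℝ) (hWsymm : ∀ i j, W i j = W j i) :
    ∀ c : ℝ, ∃ δ : ℝ, 0 < δ ∧ ∃ M : ℝ, 0 < M ∧
      ∀ ρ S : Fin N → ℝ, (∀ i, 0 < ρ i) → (∑ i, ρ i = 1) →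
        H0 E ω ωt β α V W ρ S ≤ c →
        (∀ i, δ ≤ ρ i) ∧ (∀ i j, E i j → |S i - S j| ≤ M) := by
  classical
  intro c
  -- there is at least one edge
  have hNpos : 0 < N := by omega
  have h01 : (⟨0, by omega⟩ : Fin N) ≠ (⟨1, by omega⟩ : Fin N) := by
    simp [Fin.ext_iff]
  obtain ⟨p0, hp0⟩ : ∃ p : Fin N × Fin N, E p.1 p.2 := by
    rcases (hconn ⟨0, by omega⟩ ⟨1, by omega⟩).cases_head with h | ⟨k, hk, -⟩
    · exact absurd h h01
    · exact ⟨(⟨0, by omega⟩, k), hk⟩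
  set Eset : Finset (Fin N × Fin N) :=
    Finset.univ.filter (fun p : Fin N × Fin N => E p.1 p.2) with hEset
  have hEne : Eset.Nonempty := ⟨p0, by simp [hEset, hp0]⟩
  set wtmin := Eset.inf' hEne (fun p => ωt p.1 p.2) with hwtminDef
  set wmin := Eset.inf' hEne (fun p => ω p.1 p.2) with hwminDef
  have hwtmin : 0 < wtmin := by
    rw [hwtminDef, Finset.lt_inf'_iff]
    intro p hp
    exact hωtpos p.1 p.2 (by simpa [hEset] using hp)
  have hwmin : 0 < wmin := by
    rw [hwminDef, Finset.lt_inf'_iff]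
    intro p hp
    exact hωpos p.1 p.2 (by simpa [hEset] using hp)
  have hwtle : ∀ u v, E u v → wtmin ≤ ωt u v := fun u v h =>
    Finset.inf'_le (fun p => ωt p.1 p.2) (show (u, v) ∈ Eset by simp [hEset, h])
  have hwle : ∀ u v, E u v → wmin ≤ ω u v := fun u v h =>
    Finset.inf'_le (fun p => ω p.1 p.2) (show (u, v) ∈ Eset by simp [hEset, h])
  set CV := ∑ i, |V i| with hCV
  set CW := (1 / 2) * ∑ i, ∑ j, |W i j| with hCW
  have hCVnn : 0 ≤ CV := Finset.sum_nonneg fun i _ => abs_nonneg _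
  have hCWnn : 0 ≤ CW := by
    apply mul_nonneg (by norm_num)
    exact Finset.sum_nonneg fun i _ => Finset.sum_nonneg fun j _ => abs_nonneg _
  set B := max (c + CV + CW + 2 * N * |α|) 0 with hB
  have hBnn : 0 ≤ B := le_max_right _ _
  set C0 := B / β with hC0
  have hC0nn : 0 ≤ C0 := div_nonneg hBnn hβ.le
  set C1 := 2 * C0 / wtmin with hC1
  have hC1nn : 0 ≤ C1 := div_nonneg (by linarith) hwtmin.le
  have hNinv : (0 : ℝ) < (N : ℝ)⁻¹ := by positivity
  set δ := (gfun C1)^[N] ((N : ℝ)⁻¹) with hδDef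
  have hδ : 0 < δ := gfun_iter_pos _ _ hNinv
  have iterpos : ∀ n, 0 < (gfun C1)^[n] ((N : ℝ)⁻¹) := fun n => gfun_iter_pos _ _ hNinv
  have iterstep : ∀ n, (gfun C1)^[n + 1] ((N : ℝ)⁻¹) ≤ (gfun C1)^[n] ((N : ℝ)⁻¹) := by
    intro n
    rw [Function.iterate_succ_apply']
    exact gfun_le (iterpos n)
  set M := Real.sqrt (4 * B / (wmin * δ)) + 1 with hM
  have hMpos : 0 < M := by positivity
  refine ⟨δ, hδ, M, hMpos, ?_⟩
  intro ρ S hρ hsum hH0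
  have hρle1 : ∀ i, ρ i ≤ 1 := by
    intro i
    calc ρ i ≤ ∑ j, ρ j := Finset.single_le_sum (fun j _ => (hρ j).le) (Finset.mem_univ i)
      _ = 1 := hsum
  -- nonnegativity of kinetic and Fisher terms
  have hKtermnn : ∀ i j : Fin N,
      0 ≤ (if E i j then ω i j * (S i - S j) ^ 2 * thetaA ρ i j else 0) := by
    intro i j
    split
    · next hij =>
      have hθ : 0 ≤ thetaA ρ i j := by
        have := hρ i; have := hρ j; unfold thetaA; linarith
      have := hωpos i j hij
      positivity
    · exact le_refl 0
  have hItermnn : ∀ i j : Fin N,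
      0 ≤ (if E i j then ωt i j * (Real.log (ρ i) - Real.log (ρ j)) * (ρ i - ρ j) else 0) := by
    intro i j
    split
    · next hij =>
      rw [mul_assoc]
      exact mul_nonneg (hωtpos i j hij).le (log_sub_mul_nonneg (hρ i) (hρ j))
    · exact le_refl 0
  have hKnn : 0 ≤ kinE E ω ρ S := by
    unfold kinE
    apply mul_nonneg (by norm_num)
    exact Finset.sum_nonneg fun i _ => Finset.sum_nonneg fun j _ => hKtermnn i j
  have hInn : 0 ≤ fisherI E ωt ρ := by
    unfold fisherI
    apply mul_nonneg (by norm_num)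
    exact Finset.sum_nonneg fun i _ => Finset.sum_nonneg fun j _ => hItermnn i j
  have hVlb : -CV ≤ potV V ρ := by
    rw [hCV, ← Finset.sum_neg_distrib]
    apply Finset.sum_le_sum
    intro i _
    have h1 : |V i * ρ i| ≤ |V i| := by
      rw [abs_mul, abs_of_pos (hρ i)]
      nlinarith [abs_nonneg (V i), hρle1 i, hρ i]
    have := neg_abs_le (V i * ρ i)
    linarith [abs_le.1 h1]
  have hWlb : -CW ≤ potW W ρ := by
    have h2 : -∑ i, ∑ j, |W i j| ≤ ∑ i, ∑ j, W i j * ρ i * ρ j := by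
      rw [← Finset.sum_neg_distrib]
      apply Finset.sum_le_sum
      intro i _
      rw [← Finset.sum_neg_distrib]
      apply Finset.sum_le_sum
      intro j _
      have h1 : |W i j * ρ i * ρ j| ≤ |W i j| := by
        rw [abs_mul, abs_mul, abs_of_pos (hρ i), abs_of_pos (hρ j)]
        have hij1 : ρ i * ρ j ≤ 1 := by nlinarith [hρ i, hρ j, hρle1 i, hρle1 j]
        calc |W i j| * ρ i * ρ j = |W i j| * (ρ i * ρ j) := by ring
          _ ≤ |W i j| * 1 := mul_le_mul_of_nonneg_left hij1 (abs_nonneg _)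
          _ = |W i j| := mul_one _
      linarith [abs_le.1 h1, neg_abs_le (W i j * ρ i * ρ j)]
    unfold potW
    rw [hCW]
    linarith
  have hentlb : ∀ i : Fin N, -2 ≤ ρ i * Real.log (ρ i) - ρ i := by
    intro i
    have h1 : Real.log (ρ i)⁻¹ ≤ (ρ i)⁻¹ - 1 :=
      Real.log_le_sub_one_of_pos (inv_pos.2 (hρ i))
    rw [Real.log_inv] at h1
    have h2 : ρ i * Real.log (ρ i) ≥ ρ i - 1 := by
      have h3 : ρ i * (-Real.log (ρ i)) ≤ ρ i * ((ρ i)⁻¹ - 1) :=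
        mul_le_mul_of_nonneg_left h1 (hρ i).le
      have h4 : ρ i * (ρ i)⁻¹ = 1 := mul_inv_cancel₀ (hρ i).ne'
      have h5 : ρ i * ((ρ i)⁻¹ - 1) = 1 - ρ i := by rw [mul_sub, h4]; ring
      have h6 : ρ i * (-Real.log (ρ i)) = -(ρ i * Real.log (ρ i)) := by ring
      linarith
    linarith [hρle1 i]
  have hentub : ∀ i : Fin N, ρ i * Real.log (ρ i) - ρ i ≤ 0 := by
    intro i
    have h1 : Real.log (ρ i) ≤ 0 := Real.log_nonpos (hρ i).le (hρle1 i)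
    nlinarith [hρ i]
  have hent : |entL ρ| ≤ 2 * N := by
    rw [abs_le]
    constructor
    · calc (-(2 * N) : ℝ) = ∑ _i : Fin N, (-2 : ℝ) := by
            simp [Finset.sum_const, Finset.card_univ]; ring
        _ ≤ entL ρ := Finset.sum_le_sum fun i _ => hentlb i
    · calc entL ρ ≤ ∑ _i : Fin N, (0 : ℝ) := Finset.sum_le_sum fun i _ => hentub i
        _ = 0 := by simp
        _ ≤ 2 * N := by positivity
  have hαent : α * entL ρ ≤ 2 * N * |α| := by
    calc α * entL ρ ≤ |α * entL ρ| := le_abs_self _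
      _ = |α| * |entL ρ| := abs_mul _ _
      _ ≤ |α| * (2 * N) := mul_le_mul_of_nonneg_left hent (abs_nonneg _)
      _ = 2 * N * |α| := by ring
  have hH0' : kinE E ω ρ S + β * fisherI E ωt ρ ≤ B := by
    have h1 : kinE E ω ρ S + β * fisherI E ωt ρ =
        H0 E ω ωt β α V W ρ S - potV V ρ - potW W ρ + α * entL ρ := by
      unfold H0; ring
    rw [h1]
    have : H0 E ω ωt β α V W ρ S - potV V ρ - potW W ρ + α * entL ρ ≤
        c + CV + CW + 2 * N * |α| := by linarith
    exact le_trans this (le_max_left _ _)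
  have hIb : fisherI E ωt ρ ≤ C0 := by
    rw [hC0, le_div_iff₀ hβ]
    nlinarith
  have hKb : kinE E ω ρ S ≤ B := by nlinarith
  -- per-edge Fisher bound
  have hterm : ∀ u v, E u v →
      (Real.log (ρ u) - Real.log (ρ v)) * (ρ u - ρ v) ≤ C1 := by
    intro u v huv
    have hle1 : (if E u v then ωt u v * (Real.log (ρ u) - Real.log (ρ v)) * (ρ u - ρ v) else 0)
        ≤ ∑ j, (if E u j then ωt u j * (Real.log (ρ u) - Real.log (ρ j)) * (ρ u - ρ j) else 0) :=
      Finset.single_le_sum (fun j _ => hItermnn u j) (Finset.mem_univ v)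
    have hle2 : (∑ j, (if E u j then ωt u j * (Real.log (ρ u) - Real.log (ρ j)) * (ρ u - ρ j) else 0))
        ≤ ∑ i, ∑ j, (if E i j then ωt i j * (Real.log (ρ i) - Real.log (ρ j)) * (ρ i - ρ j) else 0) :=
      Finset.single_le_sum (fun i _ => Finset.sum_nonneg fun j _ => hItermnn i j)
        (Finset.mem_univ u)
    have hsumle : (∑ i, ∑ j, (if E i j then ωt i j * (Real.log (ρ i) - Real.log (ρ j)) * (ρ i - ρ j) else 0))
        ≤ 2 * C0 := by
      have := hIb
      unfold fisherI at this
      linarith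
    rw [if_pos huv] at hle1
    have h1 : ωt u v * (Real.log (ρ u) - Real.log (ρ v)) * (ρ u - ρ v) ≤ 2 * C0 := by
      linarith
    have hX : 0 ≤ (Real.log (ρ u) - Real.log (ρ v)) * (ρ u - ρ v) :=
      log_sub_mul_nonneg (hρ u) (hρ v)
    rw [hC1, le_div_iff₀ hwtmin]
    have h2 : wtmin * ((Real.log (ρ u) - Real.log (ρ v)) * (ρ u - ρ v))
        ≤ ωt u v * ((Real.log (ρ u) - Real.log (ρ v)) * (ρ u - ρ v)) :=
      mul_le_mul_of_nonneg_right (hwtle u v huv) hX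
    nlinarith [h1, h2]
  -- counting induction
  have key : ∀ n : ℕ, (∀ i, (gfun C1)^[n] ((N : ℝ)⁻¹) ≤ ρ i) ∨
      (n + 1 ≤ (Finset.univ.filter (fun i => (gfun C1)^[n] ((N : ℝ)⁻¹) ≤ ρ i)).card) := by
    intro n
    induction n with
    | zero =>
      right
      have hex : ∃ i, (N : ℝ)⁻¹ ≤ ρ i := by
        by_contra hcon
        push_neg at hcon
        have hune : (Finset.univ : Finset (Fin N)).Nonempty := ⟨⟨0, hNpos⟩, Finset.mem_univ _⟩
        have h1 : (1 : ℝ) < 1 := by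
          calc (1 : ℝ) = ∑ i, ρ i := hsum.symm
            _ < ∑ _i : Fin N, (N : ℝ)⁻¹ :=
                Finset.sum_lt_sum_of_nonempty hune (fun i _ => hcon i)
            _ = 1 := by
                rw [Finset.sum_const, Finset.card_univ, Fintype.card_fin, nsmul_eq_mul]
                field_simp
        exact lt_irrefl 1 h1
      obtain ⟨i, hi⟩ := hex
      have hmem : i ∈ Finset.univ.filter (fun i => (gfun C1)^[0] ((N : ℝ)⁻¹) ≤ ρ i) := by
        simp only [Function.iterate_zero_apply, Finset.mem_filter, Finset.mem_univ, true_and]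
        exact Finset.mem_filter.2 ⟨Finset.mem_univ _, hi⟩
      simpa using Finset.card_pos.2 ⟨i, hmem⟩
    | succ n ih =>
      rcases ih with h | h
      · left; intro i; exact le_trans (iterstep n) (h i)
      · by_cases hall : ∀ i, (gfun C1)^[n] ((N : ℝ)⁻¹) ≤ ρ i
        · left; intro i; exact le_trans (iterstep n) (hall i)
        · push_neg at hall
          obtain ⟨j, hj⟩ := hall
          have hcard0 : 0 <
              (Finset.univ.filter (fun i => (gfun C1)^[n] ((N : ℝ)⁻¹) ≤ ρ i)).card := by omega
          obtain ⟨i0, hi0⟩ := Finset.card_pos.1 hcard0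
          have hi0' : (gfun C1)^[n] ((N : ℝ)⁻¹) ≤ ρ i0 := (Finset.mem_filter.1 hi0).2
          obtain ⟨u, v, huv, hu, hv⟩ := cross_lemma E
            (fun x => (gfun C1)^[n] ((N : ℝ)⁻¹) ≤ ρ x) (hconn i0 j) hi0' (not_le.2 hj)
          have hρv : (gfun C1)^[n + 1] ((N : ℝ)⁻¹) ≤ ρ v := by
            rw [Function.iterate_succ_apply']
            exact step_lemma (iterpos n) (hρ v) hu (hterm u v huv)
          right
          have hvnot : v ∉ Finset.univ.filter (fun i => (gfun C1)^[n] ((N : ℝ)⁻¹) ≤ ρ i) := by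
            simp only [Finset.mem_filter, Finset.mem_univ, true_and]
            exact hv
          have hsub : insert v (Finset.univ.filter (fun i => (gfun C1)^[n] ((N : ℝ)⁻¹) ≤ ρ i))
              ⊆ Finset.univ.filter (fun i => (gfun C1)^[n + 1] ((N : ℝ)⁻¹) ≤ ρ i) := by
            intro x hx
            rcases Finset.mem_insert.1 hx with rfl | hx
            · simp only [Finset.mem_filter, Finset.mem_univ, true_and]
              exact hρv
            · simp only [Finset.mem_filter, Finset.mem_univ, true_and]
              exact le_trans (iterstep n) ((Finset.mem_filter.1 hx).2)
          have hc1 := Finset.card_insert_of_notMem hvnot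
          have hc2 := Finset.card_le_card hsub
          omega
  have hmin : ∀ i, δ ≤ ρ i := by
    rcases key N with h | h
    · rw [hδDef]; exact h
    · exfalso
      have hcl := Finset.card_filter_le Finset.univ
        (fun i => (gfun C1)^[N] ((N : ℝ)⁻¹) ≤ ρ i)
      rw [Finset.card_univ, Fintype.card_fin] at hcl
      omega
  refine ⟨hmin, ?_⟩
  intro u v huv
  have hθ : δ ≤ thetaA ρ u v := by
    have := hmin u; have := hmin v; unfold thetaA; linarith
  have hθnn : 0 ≤ thetaA ρ u v := le_trans hδ.le hθ
  have hKsingle : ω u v * (S u - S v) ^ 2 * thetaA ρ u v ≤ 4 * B := by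
    have hle1 : (if E u v then ω u v * (S u - S v) ^ 2 * thetaA ρ u v else 0)
        ≤ ∑ j, (if E u j then ω u j * (S u - S j) ^ 2 * thetaA ρ u j else 0) :=
      Finset.single_le_sum (fun j _ => hKtermnn u j) (Finset.mem_univ v)
    have hle2 : (∑ j, (if E u j then ω u j * (S u - S j) ^ 2 * thetaA ρ u j else 0))
        ≤ ∑ i, ∑ j, (if E i j then ω i j * (S i - S j) ^ 2 * thetaA ρ i j else 0) :=
      Finset.single_le_sum (fun i _ => Finset.sum_nonneg fun j _ => hKtermnn i j)
        (Finset.mem_univ u)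
    have hsumle : (∑ i, ∑ j, (if E i j then ω i j * (S i - S j) ^ 2 * thetaA ρ i j else 0))
        ≤ 4 * B := by
      unfold kinE at hKb
      linarith
    rw [if_pos huv] at hle1
    linarith
  have hsq : (S u - S v) ^ 2 ≤ 4 * B / (wmin * δ) := by
    rw [le_div_iff₀ (by positivity)]
    have a1 : 0 ≤ (ω u v - wmin) * ((S u - S v) ^ 2 * thetaA ρ u v) :=
      mul_nonneg (sub_nonneg.2 (hwle u v huv)) (mul_nonneg (sq_nonneg _) hθnn)
    have a2 : 0 ≤ (wmin * (S u - S v) ^ 2) * (thetaA ρ u v - δ) :=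
      mul_nonneg (mul_nonneg hwmin.le (sq_nonneg _)) (sub_nonneg.2 hθ)
    nlinarith [a1, a2, hKsingle]
  have h2 := Real.sqrt_le_sqrt hsq
  rw [Real.sqrt_sq_eq_abs] at h2
  have h3 : Real.sqrt (4 * B / (wmin * δ)) ≤ M - 1 := by rw [hM]; linarith
  exact h2.trans (by linarith)


end
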